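/- Let φ be a minimal homeomorphism of a Cantor space X, A a nonempty clopen set, and for k ≥ 1 set A_k = {x ∈ A : τ_A(x) = k} where τ_A is the first return time. Then the family of sets φ^j(A_k), for k in the (finite) image of τ_A and 0 ≤ j < k, forms a partition of X into clopen sets. -/
import Mathlib


open Set TopologicalSpace MeasureTheory ENNReal

instance homeoGroup (X : Type*) [TopologicalSpace X] : Group (X ≃ₜ X) where
  mul f g := g.trans f
  one := Homeomorph.refl X
  inv := Homeomorph.symm
  mul_assoc _ _ _ := Homeomorph.ext fun _ => rfl
  one_mul _ := Homeomorph.ext fun _ => rfl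
  mul_one _ := Homeomorph.ext fun _ => rfl
  inv_mul_cancel f := Homeomorph.ext fun x => f.symm_apply_apply x

/-- A homeomorphism is minimal if every (two-sided) orbit is dense. -/
def MinimalHomeo {X : Type*} [TopologicalSpace X] (φ : X ≃ₜ X) : Prop :=
  ∀ x : X, Dense {y : X | ∃ n : ℤ, (φ ^ n) x = y}

/-- First return time to a set `A`. -/
noncomputable def retTime {X : Type*} [TopologicalSpace X] (φ : X ≃ₜ X) (A : Set X) (x : X) : ℕ :=
  sInf {k : ℕ | 0 < k ∧ (φ ^ k) x ∈ A}

section KRaux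

variable {X : Type*} [TopologicalSpace X] [CompactSpace X]

lemma homeo_pow_add_apply (φ : X ≃ₜ X) (m n : ℕ) (x : X) :
    (φ ^ (m + n)) x = (φ ^ m) ((φ ^ n) x) := by rw [pow_add]; rfl

lemma homeo_zpow_add_apply (φ : X ≃ₜ X) (m n : ℤ) (x : X) :
    (φ ^ (m + n)) x = (φ ^ m) ((φ ^ n) x) := by rw [zpow_add]; rfl

/-- Uniform forward hitting of a nonempty open set, from minimality and compactness. -/
lemma KR_cover (φ : X ≃ₜ X) (hmin : MinimalHomeo φ) {A : Set X} (hA : IsOpen A)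
    (hne : A.Nonempty) : ∃ N : ℕ, ∀ x : X, ∃ n ≤ N, (φ ^ n) x ∈ A := by
  have hcov : (univ : Set X) ⊆ ⋃ n : ℤ, (⇑(φ ^ n)) ⁻¹' A := by
    intro x _
    obtain ⟨y, ⟨n, hn⟩, hyA⟩ := (hmin x).exists_mem_open hA hne
    exact mem_iUnion.mpr ⟨n, by simp only [mem_preimage, hn]; exact hyA⟩
  obtain ⟨t, ht⟩ := isCompact_univ.elim_finite_subcover
    (fun n : ℤ => (⇑(φ ^ n)) ⁻¹' A) (fun n => hA.preimage (φ ^ n).continuous) hcov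
  set M : ℕ := t.sup fun n => (-n).toNat with hM
  refine ⟨M + t.sup (fun n => n.toNat), fun x => ?_⟩
  have hx : ((φ ^ (M : ℤ)) x) ∈ ⋃ n ∈ t, (⇑(φ ^ n)) ⁻¹' A := ht (mem_univ _)
  obtain ⟨n, hnt, hnx⟩ := mem_iUnion₂.mp hx
  have hnM : (0 : ℤ) ≤ n + M := by
    have h1 : (-n).toNat ≤ M := Finset.le_sup (f := fun n => (-n).toNat) hnt
    omega
  have key : (φ ^ ((n + M).toNat)) x ∈ A := by
    have : (φ ^ (n + (M : ℤ))) x ∈ A := by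
      rw [homeo_zpow_add_apply]
      simpa [zpow_natCast] using hnx
    rw [← Int.toNat_of_nonneg hnM, zpow_natCast] at this
    exact this
  refine ⟨(n + M).toNat, ?_, key⟩
  have h2 : n.toNat ≤ t.sup (fun n => n.toNat) := Finset.le_sup (f := fun n => n.toNat) hnt
  omega

lemma KR_ret_nonempty (φ : X ≃ₜ X) (hmin : MinimalHomeo φ) {A : Set X} (hA : IsOpen A)
    (hne : A.Nonempty) (x : X) : {k : ℕ | 0 < k ∧ (φ ^ k) x ∈ A}.Nonempty := by
  obtain ⟨N, hN⟩ := KR_cover φ hmin hA hne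
  obtain ⟨n, _, hn⟩ := hN (φ x)
  refine ⟨n + 1, n.succ_pos, ?_⟩
  rw [homeo_pow_add_apply]
  simpa [pow_one] using hn

/-- Every point has a backward visit to `A`. -/
lemma KR_backward (φ : X ≃ₜ X) (hmin : MinimalHomeo φ) {A : Set X} (hA : IsOpen A)
    (hne : A.Nonempty) (x : X) : ∃ j : ℕ, ∃ z ∈ A, (φ ^ j) z = x := by
  obtain ⟨N, hN⟩ := KR_cover φ hmin hA hne
  obtain ⟨n, hnN, hn⟩ := hN ((φ ^ N).symm x)
  refine ⟨N - n, (φ ^ n) ((φ ^ N).symm x), hn, ?_⟩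
  rw [← homeo_pow_add_apply, Nat.sub_add_cancel hnN, Homeomorph.apply_symm_apply]

end KRaux

section KRmain

variable {X : Type*} [TopologicalSpace X] [CompactSpace X]

/-- Level sets of the return time are clopen (intersected with A). -/
lemma KR_level_clopen (φ : X ≃ₜ X) (hmin : MinimalHomeo φ) {A : Set X} (hA : IsClopen A)
    (hne : A.Nonempty) (k : ℕ) (hk : 0 < k) :
    IsClopen {x ∈ A | retTime φ A x = k} := by
  have hSne := KR_ret_nonempty φ hmin hA.isOpen hne
  have heq : {x ∈ A | retTime φ A x = k} =
      (A ∩ (⇑(φ ^ k)) ⁻¹' A) ∩ ⋂ i ∈ Finset.Ioo 0 k, (⇑(φ ^ i)) ⁻¹' Aᶜ := by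
    ext x
    constructor
    · rintro ⟨hxA, hret⟩
      have hmem : 0 < k ∧ (φ ^ k) x ∈ A := by
        have := Nat.sInf_mem (hSne x)
        rwa [show sInf {k : ℕ | 0 < k ∧ (φ ^ k) x ∈ A} = k from hret] at this
      refine ⟨⟨hxA, hmem.2⟩, ?_⟩
      simp only [mem_iInter, Finset.mem_Ioo, mem_preimage, mem_compl_iff]
      rintro i ⟨hi0, hik⟩ hiA
      have : retTime φ A x ≤ i := Nat.sInf_le ⟨hi0, hiA⟩
      omega
    · rintro ⟨⟨hxA, hk'⟩, hI⟩
      refine ⟨hxA, ?_⟩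
      have hle : retTime φ A x ≤ k := Nat.sInf_le ⟨hk, hk'⟩
      have hmem := Nat.sInf_mem (hSne x)
      rcases lt_or_eq_of_le hle with hlt | h
      · exfalso
        simp only [mem_iInter, Finset.mem_Ioo, mem_preimage, mem_compl_iff] at hI
        exact hI (retTime φ A x) ⟨hmem.1, hlt⟩ hmem.2
      · exact h
  rw [heq]
  refine IsClopen.inter (hA.inter (hA.preimage (φ ^ k).continuous)) ?_
  exact isClopen_biInter_finset fun i _ => hA.compl.preimage (φ ^ i).continuous

lemma KR_disj_aux (φ : X ≃ₜ X) (hmin : MinimalHomeo φ) {A : Set X} (hA : IsClopen A)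
    (hne : A.Nonempty) {k j k' j' : ℕ} (hjk : j < k) (hj'k' : j' < k') (hle : j ≤ j')
    {a b : X} (haA : a ∈ A) (hak : retTime φ A a = k) (hbA : b ∈ A)
    (hbk : retTime φ A b = k') (heq : (φ ^ j) a = (φ ^ j') b) : (k, j) = (k', j') := by
  have hab : a = (φ ^ (j' - j)) b := by
    apply (φ ^ j).injective
    rw [heq, ← homeo_pow_add_apply, Nat.add_sub_cancel' hle]
  rcases Nat.eq_zero_or_pos (j' - j) with hd | hd
  · have hj : j = j' := by omega
    have : a = b := by rw [hab, hd]; rfl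
    subst this
    rw [hj, hak.symm.trans hbk]
  · exfalso
    have hmem : j' - j ∈ {m : ℕ | 0 < m ∧ (φ ^ m) b ∈ A} := ⟨hd, hab ▸ haA⟩
    have := Nat.sInf_le hmem
    rw [show sInf {m : ℕ | 0 < m ∧ (φ ^ m) b ∈ A} = k' from hbk] at this
    omega

end KRmain

/-- the Kakutani–Rokhlin partition: the sets `φ^j(A_k)` for `0 ≤ j < k`
(`A_k` the level sets of the return time) are clopen, pairwise disjoint and cover `X`. -/
theorem stmt_6 {X : Type*} [TopologicalSpace X] [CompactSpace X] [MetrizableSpace X]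
    [TotallyDisconnectedSpace X] [PerfectSpace X] [Nonempty X]
    (φ : X ≃ₜ X) (hmin : MinimalHomeo φ) (A : Set X) (hA : IsClopen A)
    (hne : A.Nonempty) :
    (∀ k j : ℕ, j < k → IsClopen (⇑(φ ^ j) '' {x ∈ A | retTime φ A x = k})) ∧
      (⋃ k : ℕ, ⋃ j ∈ Finset.range k, ⇑(φ ^ j) '' {x ∈ A | retTime φ A x = k}) = Set.univ ∧
      ∀ k j k' j' : ℕ, j < k → j' < k' → (k, j) ≠ (k', j') →
        Disjoint (⇑(φ ^ j) '' {x ∈ A | retTime φ A x = k})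
          (⇑(φ ^ j') '' {x ∈ A | retTime φ A x = k'}) := by
  refine ⟨?_, ?_, ?_⟩
  · intro k j hjk
    have h := KR_level_clopen φ hmin hA hne k (by omega)
    rw [← Homeomorph.preimage_symm]
    exact h.preimage (φ ^ j).symm.continuous
  · apply eq_univ_of_forall
    intro x
    have hT : {m : ℕ | ∃ z ∈ A, (φ ^ m) z = x}.Nonempty := KR_backward φ hmin hA.isOpen hne x
    set j₀ := sInf {m : ℕ | ∃ z ∈ A, (φ ^ m) z = x} with hj₀
    obtain ⟨z, hzA, hzx⟩ := Nat.sInf_mem hT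
    set k := retTime φ A z with hk
    have hkS : 0 < k ∧ (φ ^ k) z ∈ A := Nat.sInf_mem (KR_ret_nonempty φ hmin hA.isOpen hne z)
    have hj₀k : j₀ < k := by
      by_contra h
      push_neg at h
      have hmem : j₀ - k ∈ {m : ℕ | ∃ z ∈ A, (φ ^ m) z = x} := by
        refine ⟨(φ ^ k) z, hkS.2, ?_⟩
        rw [← homeo_pow_add_apply, Nat.sub_add_cancel h, hzx]
      have := Nat.sInf_le hmem
      omega
    refine mem_iUnion.mpr ⟨k, mem_iUnion₂.mpr ⟨j₀, Finset.mem_range.mpr hj₀k, ?_⟩⟩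
    exact ⟨z, ⟨hzA, rfl⟩, hzx⟩
  · intro k j k' j' hjk hj'k' hne'
    rw [Set.disjoint_left]
    rintro x ⟨a, ⟨haA, hak⟩, hax⟩ ⟨b, ⟨hbA, hbk⟩, hbx⟩
    have heq : (φ ^ j) a = (φ ^ j') b := hax.trans hbx.symm
    rcases le_total j j' with h | h
    · exact hne' (KR_disj_aux φ hmin hA hne hjk hj'k' h haA hak hbA hbk heq)
    · exact hne' ((KR_disj_aux φ hmin hA hne hj'k' hjk h hbA hbk haA hak heq.symm).symm)
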